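/- arXiv:2604.13355 — 2 statements merged into one kernel-verified Lean document; each statement's English description precedes it below -/
import Mathlib

section
/- Let {Z_t : t = 0,1,…} be a sequence of real random variables adapted to a filtration, with Z_0 deterministic and increments ΔZ_t := Z_t − Z_{t−1} satisfying ΔZ_t ≤ M almost surely. Suppose that for all t ≥ 1, E[ΔZ_t | F_{t−1}] ≤ −δ · E[(ΔZ_t)² | F_{t−1}] for some 0 < δ < 1/M. Then for all ξ ≥ 0 and all t, Pr(Z_t − Z_0 > ξ) ≤ exp(−δ ξ). -/
/-!
The process `W t = exp (δ (Z t - Z 0))` is a supermartingale. Indeed, `δ ΔZ ≤ δ M ≤ 1` and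
`exp x ≤ 1 + x + x²` for `x ≤ 1`, so the drift condition gives
`E[exp (δ ΔZ) | ℱ] ≤ 1 + δ E[ΔZ | ℱ] + δ² E[ΔZ² | ℱ] ≤ 1`. Hence `E[W t] ≤ W 0 = 1`, and the
Chernoff bound gives `Pr(Z t - Z 0 ≥ ξ) ≤ exp (-δ ξ) E[W t] ≤ exp (-δ ξ)`.
-/

open MeasureTheory ProbabilityTheory Real

lemma Real.exp_le_one_add_add_sq {x : ℝ} (hx : x ≤ 1) : exp x ≤ 1 + x + x ^ 2 := by
  rcases le_or_gt x (-1) with h | h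
  · have : exp x ≤ 1 := exp_le_one_iff.mpr (by linarith)
    nlinarith
  · have := (abs_le.mp (abs_exp_sub_one_sub_id_le (abs_le.mpr ⟨h.le, hx⟩))).2
    linarith

section

variable {Ω : Type*} {m mΩ : MeasurableSpace Ω} {μ : Measure Ω} [IsFiniteMeasure μ]

lemma condExp_exp_mul_ae_le_one {X : Ω → ℝ} {δ : ℝ} (hm : m ≤ mΩ) (hδ : 0 ≤ δ)
    (hX : Integrable X μ) (hX2 : Integrable (fun ω => X ω ^ 2) μ)
    (hδX : ∀ᵐ ω ∂μ, δ * X ω ≤ 1)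
    (hdrift : ∀ᵐ ω ∂μ, μ[X | m] ω ≤ -δ * μ[fun ω => X ω ^ 2 | m] ω) :
    ∀ᵐ ω ∂μ, μ[fun ω => exp (δ * X ω) | m] ω ≤ 1 := by
  have h_exp : Integrable (fun ω => exp (δ * X ω)) μ := by
    refine (integrable_const (exp 1)).mono'
      (continuous_exp.comp_aestronglyMeasurable (hX.1.const_mul δ)) ?_
    filter_upwards [hδX] with ω h
    rw [norm_of_nonneg (exp_pos _).le]
    exact exp_le_exp.mpr h
  have h_quad : Integrable ((fun _ => (1 : ℝ)) + δ • X + δ ^ 2 • fun ω => X ω ^ 2) μ :=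
    ((integrable_const 1).add (hX.smul δ)).add (hX2.smul (δ ^ 2))
  have h_le := condExp_mono (m := m) h_exp h_quad <| by
    filter_upwards [hδX] with ω h
    have := exp_le_one_add_add_sq h
    simp only [Pi.add_apply, Pi.smul_apply, smul_eq_mul]
    linarith
  filter_upwards [h_le, hdrift,
    condExp_add ((integrable_const 1).add (hX.smul δ)) (hX2.smul (δ ^ 2)) m,
    condExp_add (integrable_const 1) (hX.smul δ) m,
    condExp_smul (m := m) (μ := μ) δ X, condExp_smul (m := m) (μ := μ) (δ ^ 2) fun ω => X ω ^ 2]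
    with ω h_le h_drift h_add h_add' h_smul h_smul'
  simp only [Pi.add_apply, Pi.smul_apply, smul_eq_mul, condExp_const hm] at *
  nlinarith [mul_le_mul_of_nonneg_left h_drift hδ]

lemma supermartingale_of_succ_eq_mul {ℱ : Filtration ℕ mΩ} {W G : ℕ → Ω → ℝ} {C : ℝ}
    (hW : StronglyAdapted ℱ W) (hW0 : Integrable (W 0) μ) (hW_nonneg : ∀ n, 0 ≤ᵐ[μ] W n)
    (hW_succ : ∀ n, W (n + 1) = W n * G n) (hG_meas : ∀ n, AEStronglyMeasurable (G n) μ)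
    (hG_bdd : ∀ n, ∀ᵐ ω ∂μ, ‖G n ω‖ ≤ C) (hG_condExp : ∀ n, μ[G n | ℱ n] ≤ᵐ[μ] 1) :
    Supermartingale W ℱ μ := by
  have hG_int : ∀ n, Integrable (G n) μ := fun n =>
    (integrable_const C).mono' (hG_meas n) (hG_bdd n)
  have hW_int : ∀ n, Integrable (W n) μ := by
    intro n
    induction n with
    | zero => exact hW0
    | succ n ih => rw [hW_succ]; exact ih.mul_bdd (hG_meas n) (hG_bdd n)
  refine supermartingale_nat hW hW_int fun n => ?_
  rw [hW_succ]
  filter_upwards [condExp_mul_of_stronglyMeasurable_left (hW n) (hW_succ n ▸ hW_int (n + 1))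
    (hG_int n), hG_condExp n, hW_nonneg n] with ω h_pull h_le h_nonneg
  rw [h_pull, Pi.mul_apply]
  exact mul_le_of_le_one_right h_nonneg h_le

lemma supermartingale_exp_mul_sub_zero {ℱ : Filtration ℕ mΩ} {Z : ℕ → Ω → ℝ} {M δ : ℝ}
    (hadapt : Adapted ℱ Z) (hδ : 0 ≤ δ) (hδM : δ * M ≤ 1)
    (hint2 : ∀ n, Integrable (fun ω => (Z (n + 1) ω - Z n ω) ^ 2) μ)
    (hbdd : ∀ n, ∀ᵐ ω ∂μ, Z (n + 1) ω - Z n ω ≤ M)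
    (hdrift : ∀ n, ∀ᵐ ω ∂μ, μ[fun ω => Z (n + 1) ω - Z n ω | ℱ n] ω ≤
      -δ * μ[fun ω => (Z (n + 1) ω - Z n ω) ^ 2 | ℱ n] ω) :
    Supermartingale (fun t ω => exp (δ * (Z t ω - Z 0 ω))) ℱ μ := by
  have hZ : ∀ t, Measurable[ℱ t] fun ω => Z t ω - Z 0 ω := fun t =>
    (hadapt t).sub ((hadapt 0).mono (ℱ.mono (Nat.zero_le t)) le_rfl)
  have hZ_meas : ∀ t, Measurable (Z t) := fun t => (hadapt t).mono (ℱ.le t) le_rfl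
  have hΔ_meas : ∀ n, AEStronglyMeasurable (fun ω => Z (n + 1) ω - Z n ω) μ := fun n =>
    ((hZ_meas (n + 1)).sub (hZ_meas n)).aestronglyMeasurable
  have hΔ_int : ∀ n, Integrable (fun ω => Z (n + 1) ω - Z n ω) μ := fun n =>
    ((memLp_two_iff_integrable_sq (hΔ_meas n)).mpr (hint2 n)).integrable one_le_two
  have hδΔ : ∀ n, ∀ᵐ ω ∂μ, δ * (Z (n + 1) ω - Z n ω) ≤ 1 := fun n => by
    filter_upwards [hbdd n] with ω h
    nlinarith
  refine supermartingale_of_succ_eq_mul (C := exp 1)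
    (G := fun n ω => exp (δ * (Z (n + 1) ω - Z n ω)))
    (fun t => (measurable_exp.comp ((hZ t).const_mul δ)).stronglyMeasurable) (by simp)
    (fun _ => ae_of_all _ fun _ => (exp_pos _).le) (fun n => ?_)
    (fun n => continuous_exp.comp_aestronglyMeasurable ((hΔ_meas n).const_mul δ))
    (fun n => ?_)
    (fun n => condExp_exp_mul_ae_le_one (ℱ.le n) hδ (hΔ_int n) (hint2 n) (hδΔ n) (hdrift n))
  · funext ω
    simp only [Pi.mul_apply, ← exp_add]
    ring_nf
  · filter_upwards [hδΔ n] with ω h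
    rw [norm_of_nonneg (exp_pos _).le]
    exact exp_le_exp.mpr h

end

theorem stmt8_general {Ω : Type*} {mΩ : MeasurableSpace Ω} (μ : Measure Ω)
    [IsProbabilityMeasure μ]
    (ℱ : Filtration ℕ mΩ) (Z : ℕ → Ω → ℝ) (hadapt : Adapted ℱ Z)
    (M δ : ℝ) (hδ : 0 < δ) (hδM : δ < 1 / M)
    (hint2 : ∀ t, Integrable (fun ω => (Z t ω - Z (t - 1) ω) ^ 2) μ)
    (hbdd : ∀ t, 1 ≤ t → ∀ᵐ ω ∂μ, Z t ω - Z (t - 1) ω ≤ M)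
    (hdrift : ∀ t, 1 ≤ t → ∀ᵐ ω ∂μ,
      (μ[fun ω => Z t ω - Z (t - 1) ω | ℱ (t - 1)]) ω ≤
        -δ * (μ[fun ω => (Z t ω - Z (t - 1) ω) ^ 2 | ℱ (t - 1)]) ω) :
    ∀ ξ : ℝ, 0 ≤ ξ → ∀ t : ℕ,
      (μ {ω | ξ < Z t ω - Z 0 ω}).toReal ≤ Real.exp (-δ * ξ) := by
  intro ξ _ t
  have hδM' : δ * M ≤ 1 := by
    rcases le_or_gt M 0 with hM | hM
    · nlinarith
    · exact ((lt_div_iff₀ hM).mp hδM).le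
  have hW := supermartingale_exp_mul_sub_zero hadapt hδ.le hδM'
    (fun n => by simpa using hint2 (n + 1)) (fun n => by simpa using hbdd (n + 1) n.succ_pos)
    (fun n => by simpa using hdrift (n + 1) n.succ_pos)
  have hmgf : mgf (fun ω => Z t ω - Z 0 ω) μ δ ≤ 1 := by
    simpa [mgf] using hW.setIntegral_le (Nat.zero_le t) MeasurableSet.univ
  calc (μ {ω | ξ < Z t ω - Z 0 ω}).toReal
      ≤ μ.real {ω | ξ ≤ Z t ω - Z 0 ω} :=
        measureReal_mono (Set.ofPred_subset_ofPred.mpr fun _ => le_of_lt)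
    _ ≤ exp (-δ * ξ) * mgf (fun ω => Z t ω - Z 0 ω) μ δ :=
      measure_ge_le_exp_mul_mgf ξ hδ.le (hW.integrable t)
    _ ≤ exp (-δ * ξ) := mul_le_of_le_one_right (exp_pos _).le hmgf

/-- Freedman-type inequality: if `(Z t)` is adapted to a filtration with `Z 0`
deterministic, increments `ΔZ t := Z t − Z (t−1)` bounded above by `M`, and the
conditional drift satisfies `E[ΔZ t | ℱ (t−1)] ≤ −δ · E[(ΔZ t)² | ℱ (t−1)]` for some
`0 < δ < 1/M`, then for all `ξ ≥ 0` and all `t`,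
`Pr(Z t − Z 0 > ξ) ≤ exp (−δ ξ)`. -/
theorem stmt8 {Ω : Type*} {mΩ : MeasurableSpace Ω} (μ : Measure Ω)
    [IsProbabilityMeasure μ]
    (ℱ : Filtration ℕ mΩ) (Z : ℕ → Ω → ℝ) (hadapt : Adapted ℱ Z)
    (c : ℝ) (hZ0 : ∀ ω, Z 0 ω = c)
    (M δ : ℝ) (hM : 0 < M) (hδ : 0 < δ) (hδM : δ < 1 / M)
    (hint : ∀ t, Integrable (Z t) μ)
    (hint2 : ∀ t, Integrable (fun ω => (Z t ω - Z (t - 1) ω) ^ 2) μ)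
    (hbdd : ∀ t, 1 ≤ t → ∀ᵐ ω ∂μ, Z t ω - Z (t - 1) ω ≤ M)
    (hdrift : ∀ t, 1 ≤ t → ∀ᵐ ω ∂μ,
      (μ[fun ω => Z t ω - Z (t - 1) ω | ℱ (t - 1)]) ω ≤
        -δ * (μ[fun ω => (Z t ω - Z (t - 1) ω) ^ 2 | ℱ (t - 1)]) ω) :
    ∀ ξ : ℝ, 0 ≤ ξ → ∀ t : ℕ,
      (μ {ω | ξ < Z t ω - Z 0 ω}).toReal ≤ Real.exp (-δ * ξ) :=
  stmt8_general μ ℱ Z hadapt M δ hδ hδM hint2 hbdd hdrift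
end

section
/- Let v₁,…,v_n ∈ R^d be vectors with ‖v_i‖₂ ≤ 1 for all i. Suppose x ∈ {−1,1}^n achieves prefix discrepancy bound ‖∑_{i=1}^t x_i v_i‖₂ ≤ E for all t ∈ [n] on every reordering instance needed. If additionally ∑_i v_i = 0 and π is the permutation obtained by placing the +1-colored vectors of x in order followed by the reversal construction of Chobanyan, then there exists a permutation π with ‖∑_{i=1}^t v_{π(i)}‖₂ ≤ E for all t. In particular, the optimal Steinitz constant S(‖·‖₂) is at most the optimal prefix discrepancy constant E(‖·‖₂). -/
/-!
Chobanyan's argument. Among all orderings of a zero-sum sequence pick one minimising the largest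
prefix-sum norm `b`, and colour it by signs whose signed prefix sums have norm at most `E`. Put the
`+` vectors in their order, followed by the `-` vectors in reverse order. A prefix of this new
ordering is either a prefix of the `+` class or, as the total sum vanishes, minus a prefix of the
`-` class; and a prefix of a colour class is half the sum of an unsigned and a signed prefix of
the old ordering. Hence every prefix has norm at most `(b + E) / 2`, and minimality gives
`b ≤ (b + E) / 2`, that is `b ≤ E`.
-/

namespace List

variable {α : Type*}

theorem exists_take_filter_eq_filter_take (p : α → Bool) :
    ∀ (l : List α) (t : ℕ), ∃ s, (l.filter p).take t = (l.take s).filter p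
  | [], _ => ⟨0, by simp⟩
  | a :: l, t => by
    by_cases hp : p a
    · cases t with
      | zero => exact ⟨0, by simp⟩
      | succ t =>
        obtain ⟨s, hs⟩ := exists_take_filter_eq_filter_take p l t
        exact ⟨s + 1, by simp [hp, hs]⟩
    · obtain ⟨s, hs⟩ := exists_take_filter_eq_filter_take p l t
      exact ⟨s + 1, by simp [hp, hs]⟩

theorem map_getD_range (l : List α) (d : α) : (range l.length).map (l.getD · d) = l := by
  apply ext_getElem <;> simp +contextual

theorem Perm.exists_eq_ofFn_comp {n : ℕ} {v : Fin n → α} {l : List α} (h : l ~ ofFn v) :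
    ∃ σ : Equiv.Perm (Fin n), l = ofFn (v ∘ σ) := by
  rw [ofFn_eq_map, ← congrFun₂ (eq_map_comp_perm v) l (finRange n)] at h
  obtain ⟨J, rfl, hJ⟩ := h
  have hlen : J.length = n := by simpa using hJ.length_eq
  let e := (hJ.nodup_iff.2 (nodup_finRange n)).getEquivOfForallMemList J
    fun i => hJ.mem_iff.2 (mem_finRange i)
  refine ⟨(finCongr hlen.symm).trans e, ?_⟩
  rw [← map_ofFn]
  congr 1
  apply ext_getElem <;> simp [e, hlen]

end List

theorem Fin.sum_Iic_eq_sum_take_ofFn {M : Type*} [AddCommMonoid M] {n : ℕ} (g : Fin n → M)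
    (t : Fin n) : ∑ i ∈ Finset.Iic t, g i = ((List.ofFn g).take (t + 1)).sum := by
  rw [List.sum_take_ofFn]
  congr 1
  ext i
  rw [Finset.mem_Iic, Finset.mem_filter_univ, Fin.le_def]
  omega

theorem List.norm_sum_take_append_reverse_le {V : Type*} [SeminormedAddCommGroup V]
    {A B : List V} {c : ℝ} (h : A.sum + B.sum = 0)
    (hA : ∀ k, ‖(A.take k).sum‖ ≤ c) (hB : ∀ k, ‖(B.take k).sum‖ ≤ c) (m : ℕ) :
    ‖((A ++ B.reverse).take m).sum‖ ≤ c := by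
  rw [List.take_append, List.sum_append]
  rcases le_or_gt m A.length with hm | hm
  · simpa [Nat.sub_eq_zero_of_le hm] using hA m
  · rw [List.take_of_length_le hm.le, List.take_reverse, List.sum_reverse]
    set r := B.length - (m - A.length)
    have hsplit := List.sum_take_add_sum_drop B r
    have : A.sum + (B.drop r).sum = -(B.take r).sum := by
      calc A.sum + (B.drop r).sum = A.sum + ((B.take r).sum + (B.drop r).sum) - (B.take r).sum := by
            abel
        _ = -(B.take r).sum := by rw [hsplit, h, zero_sub]
    rw [this, norm_neg]
    exact hB r

def signedBy {α V : Type*} [Neg V] (p : α → Bool) (f : α → V) (a : α) : V :=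
  if p a then f a else -f a

def chobanyanOrder {α : Type*} (p : α → Bool) (l : List α) : List α :=
  l.filter p ++ (l.filter (!p ·)).reverse

theorem chobanyanOrder_perm {α : Type*} (p : α → Bool) (l : List α) :
    (chobanyanOrder p l).Perm l :=
  ((List.perm_append_left_iff _).2 (List.reverse_perm _)).trans (List.filter_append_perm p l)

theorem signedBy_not {α V : Type*} [InvolutiveNeg V] (p : α → Bool) (f : α → V) :
    signedBy (!p ·) f = -signedBy p f := by
  funext a
  cases h : p a <;> simp [signedBy, h]

section PrefixSums

variable {V : Type*} [SeminormedAddCommGroup V]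

def maxPrefixNorm (L : List V) : ℝ :=
  (Finset.range (L.length + 1)).sup' Finset.nonempty_range_add_one fun m => ‖(L.take m).sum‖

theorem norm_sum_take_le_maxPrefixNorm (L : List V) (m : ℕ) :
    ‖(L.take m).sum‖ ≤ maxPrefixNorm L := by
  rw [List.take_eq_take_min]
  exact Finset.le_sup' (fun m => ‖(L.take m).sum‖) (Finset.mem_range.2 (by omega))

theorem maxPrefixNorm_le_iff {L : List V} {B : ℝ} :
    maxPrefixNorm L ≤ B ↔ ∀ m, ‖(L.take m).sum‖ ≤ B :=
  ⟨fun h m => (norm_sum_take_le_maxPrefixNorm L m).trans h,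
    fun h => Finset.sup'_le _ _ fun m _ => h m⟩

variable (V) in
def IsSteinitzBound (E : ℝ) : Prop :=
  ∀ n : ℕ, ∀ v : Fin n → V, (∀ i, ‖v i‖ ≤ 1) → ∑ i, v i = 0 →
    ∃ π : Equiv.Perm (Fin n), ∀ t : Fin n, ‖∑ i ∈ Finset.Iic t, v (π i)‖ ≤ E

end PrefixSums

section Chobanyan

variable {α V : Type*} [SeminormedAddCommGroup V] [NormedSpace ℝ V]

theorem two_smul_sum_map_filter (p : α → Bool) (f : α → V) (l : List α) :
    (2 : ℝ) • ((l.filter p).map f).sum = (l.map f).sum + (l.map (signedBy p f)).sum := by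
  induction l with
  | nil => simp
  | cons a l ih =>
    cases hp : p a <;> simp [hp, signedBy, smul_add, ih] <;> module

theorem norm_sum_map_filter_le (p : α → Bool) (f : α → V) (l : List α) :
    ‖((l.filter p).map f).sum‖ ≤ (‖(l.map f).sum‖ + ‖(l.map (signedBy p f)).sum‖) / 2 := by
  have h := congrArg norm (two_smul_sum_map_filter p f l)
  rw [norm_smul, Real.norm_two] at h
  linarith [norm_add_le (l.map f).sum (l.map (signedBy p f)).sum]

theorem norm_sum_take_map_filter_le {p : α → Bool} {f : α → V} {l : List α} {b E : ℝ}
    (hb : ∀ m, ‖((l.map f).take m).sum‖ ≤ b)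
    (hE : ∀ m, ‖((l.map (signedBy p f)).take m).sum‖ ≤ E) (k : ℕ) :
    ‖(((l.filter p).map f).take k).sum‖ ≤ (b + E) / 2 := by
  obtain ⟨s, hs⟩ := List.exists_take_filter_eq_filter_take p l k
  rw [← List.map_take, hs]
  refine (norm_sum_map_filter_le p f _).trans ?_
  rw [List.map_take, List.map_take]
  linarith [hb s, hE s]

theorem norm_sum_take_map_chobanyan_le {p : α → Bool} {f : α → V} {l : List α} {b E : ℝ}
    (hsum : (l.map f).sum = 0) (hb : ∀ m, ‖((l.map f).take m).sum‖ ≤ b)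
    (hE : ∀ m, ‖((l.map (signedBy p f)).take m).sum‖ ≤ E) (m : ℕ) :
    ‖(((chobanyanOrder p l).map f).take m).sum‖ ≤ (b + E) / 2 := by
  have hE' : ∀ m, ‖((l.map (signedBy (!p ·) f)).take m).sum‖ ≤ E := by
    intro m
    have hneg : l.map (-signedBy p f) = (l.map (signedBy p f)).map Neg.neg := by
      rw [List.map_map]; rfl
    rw [signedBy_not, hneg, ← List.map_take, ← List.sum_neg, norm_neg]
    exact hE m
  have hzero : ((l.filter p).map f).sum + ((l.filter (!p ·)).map f).sum = 0 := by
    rw [← List.sum_append, ← List.map_append, ((List.filter_append_perm p l).map f).sum_eq, hsum]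
  rw [chobanyanOrder, List.map_append, List.map_reverse]
  exact List.norm_sum_take_append_reverse_le hzero (norm_sum_take_map_filter_le hb hE)
    (norm_sum_take_map_filter_le hb hE') m

variable (V) in
def IsPrefixDiscrepancyBound (E : ℝ) : Prop :=
  ∀ m : ℕ, ∀ w : ℕ → V, (∀ i < m, ‖w i‖ ≤ 1) →
    ∃ x : ℕ → ℝ, (∀ i, x i = 1 ∨ x i = -1) ∧ ∀ t ≤ m, ‖∑ i ∈ Finset.range t, x i • w i‖ ≤ E

namespace IsPrefixDiscrepancyBound

variable {E : ℝ} (hE : IsPrefixDiscrepancyBound V E) {L : List V}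
include hE

theorem exists_perm_maxPrefixNorm_le_half (hL : ∀ a ∈ L, ‖a‖ ≤ 1) (hsum : L.sum = 0) :
    ∃ L', L'.Perm L ∧ maxPrefixNorm L' ≤ (maxPrefixNorm L + E) / 2 := by
  set w : ℕ → V := (L.getD · 0)
  have hLw : (List.range L.length).map w = L := List.map_getD_range L 0
  obtain ⟨x, hx, hxE⟩ := hE L.length w fun i hi => hL _ (by simp [w, hi])
  set p : ℕ → Bool := fun k => x k = 1
  have hsigned : ∀ k, signedBy p w k = x k • w k := by
    intro k
    rcases hx k with h | h <;> norm_num [signedBy, p, h]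
  refine ⟨(chobanyanOrder p (List.range L.length)).map w, ?_, ?_⟩
  · simpa only [hLw] using (chobanyanOrder_perm p (List.range L.length)).map w
  · rw [maxPrefixNorm_le_iff]
    refine norm_sum_take_map_chobanyan_le (by rw [hLw, hsum])
      (fun m => by rw [hLw]; exact norm_sum_take_le_maxPrefixNorm L m) fun m => ?_
    rw [← List.map_take, List.take_range]
    calc ‖((List.range (min m L.length)).map (signedBy p w)).sum‖
        = ‖∑ k ∈ Finset.range (min m L.length), x k • w k‖ := by
          -- `Finset.range k` is `List.range k` underneath, so the two sums agree definitionally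
          rw [← Finset.sum_congr rfl fun k _ => hsigned k]; rfl
      _ ≤ E := hxE _ (min_le_right _ _)

theorem exists_perm_maxPrefixNorm_le (hL : ∀ a ∈ L, ‖a‖ ≤ 1) (hsum : L.sum = 0) :
    ∃ L', L'.Perm L ∧ maxPrefixNorm L' ≤ E := by
  classical
  obtain ⟨L₀, hL₀, hmin⟩ :=
    L.permutations.toFinset.exists_min_image maxPrefixNorm ⟨L, by simp⟩
  rw [List.mem_toFinset, List.mem_permutations] at hL₀
  obtain ⟨L₁, hL₁, hhalf⟩ := hE.exists_perm_maxPrefixNorm_le_half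
    (fun a ha => hL a (hL₀.subset ha)) (hL₀.sum_eq.trans hsum)
  have := hmin L₁ (by simpa using hL₁.trans hL₀)
  exact ⟨L₀, hL₀, by linarith⟩

theorem isSteinitzBound : IsSteinitzBound V E := by
  intro n v hv hsum
  obtain ⟨L, hL, hLE⟩ := hE.exists_perm_maxPrefixNorm_le (L := List.ofFn v)
    (by simpa [List.mem_ofFn] using hv) (by rw [List.sum_ofFn, hsum])
  obtain ⟨σ, rfl⟩ := hL.exists_eq_ofFn_comp
  exact ⟨σ, fun t => by
    rw [Fin.sum_Iic_eq_sum_take_ofFn (fun i => v (σ i))]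
    exact maxPrefixNorm_le_iff.1 hLE _⟩

end IsPrefixDiscrepancyBound

end Chobanyan

/-- Chobanyan's reduction `S(‖·‖₂) ≤ E(‖·‖₂)`: if `E` is a valid `ℓ₂` prefix
discrepancy bound (for every finite sequence of vectors of norm at most `1` there are
signs making all partial signed sums of norm at most `E`), then for every zero-sum
sequence `v₁, …, vₙ` of vectors of norm at most `1` there is a permutation `π` with
all partial sums `‖∑_{i ≤ t} v_{π(i)}‖₂ ≤ E`. -/
theorem stmt15 (d n : ℕ) (E : ℝ)
    (hE : ∀ m : ℕ, ∀ w : ℕ → EuclideanSpace ℝ (Fin d), (∀ i < m, ‖w i‖ ≤ 1) →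
      ∃ x : ℕ → ℝ, (∀ i, x i = 1 ∨ x i = -1) ∧
        ∀ t ≤ m, ‖∑ i ∈ Finset.range t, x i • w i‖ ≤ E)
    (v : Fin n → EuclideanSpace ℝ (Fin d))
    (hv : ∀ i, ‖v i‖ ≤ 1) (hsum : ∑ i, v i = 0) :
    ∃ π : Equiv.Perm (Fin n), ∀ t : Fin n, ‖∑ i ∈ Finset.Iic t, v (π i)‖ ≤ E :=
  IsPrefixDiscrepancyBound.isSteinitzBound hE n v hv hsum
end
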